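/- arXiv:0806.3691 — 2 statements merged into one kernel-verified Lean document; each statement's English description precedes it below -/
import Mathlib

section
/- In the braid group B∞, for all 1 ≤ k ≤ l, the descending product of square roots of free generators satisfies γ_l γ_{l−1} γ_{l−2} ⋯ γ_{k+1} γ_k = (σ_1 σ_2 ⋯ σ_{l−1} σ_l)(σ_{k−1}^{−1} σ_{k−2}^{−1} ⋯ σ_2^{−1} σ_1^{−1}). -/
/-- The Artin braid relations on the free group with generators `σ_i`, `i ∈ ℕ+`. -/
def braidRels : Set (FreeGroup ℕ+) :=
  {r | ∃ i j : ℕ+,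
    ((j : ℕ) = (i : ℕ) + 1 ∧
      r = FreeGroup.of i * FreeGroup.of j * FreeGroup.of i *
          (FreeGroup.of j * FreeGroup.of i * FreeGroup.of j)⁻¹) ∨
    ((i : ℕ) + 1 < (j : ℕ) ∧
      r = FreeGroup.of i * FreeGroup.of j * (FreeGroup.of j * FreeGroup.of i)⁻¹)}

/-- The braid group `B∞` on infinitely many strands, presented by the Artin generators
`σ_1, σ_2, …` subject to the braid relations. -/
abbrev BraidInf : Type := PresentedGroup braidRels

/-- The Artin generator `σ_n` of `B∞` for `n ≥ 1`, with the paper's convention `σ_0 = 1`. -/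
def sig (n : ℕ) : BraidInf :=
  if h : 0 < n then PresentedGroup.of (⟨n, h⟩ : ℕ+) else 1

/-- Ascending product `f a * f (a+1) * ⋯ * f b` (equal to `1` when `b < a`). -/
def ascProd {G : Type*} [Monoid G] (f : ℕ → G) (a b : ℕ) : G :=
  ((List.range' a (b + 1 - a)).map f).prod

/-- Descending product `f b * f (b-1) * ⋯ * f a` (equal to `1` when `b < a`). -/
def descProd {G : Type*} [Monoid G] (f : ℕ → G) (b a : ℕ) : G :=
  (((List.range' a (b + 1 - a)).map f).reverse).prod

/-- The square roots of free generators
`γ_k = (σ_1 ⋯ σ_{k−1}) σ_k (σ_{k−1}^{−1} ⋯ σ_1^{−1})` of `B∞`. -/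
def γ (k : ℕ) : BraidInf :=
  ascProd sig 1 (k - 1) * sig k * descProd (fun i => (sig i)⁻¹) (k - 1) 1

/-- The subgroup `B_n` of `B∞` generated by `σ_1, …, σ_{n−1}`. -/
def Bsub (n : ℕ) : Subgroup BraidInf :=
  Subgroup.closure {x | ∃ i : ℕ, 1 ≤ i ∧ i < n ∧ x = sig i}

/-- The subgroup `B_{m,∞}` of `B∞` generated by `{σ_k : k ≥ m}`. -/
def BFrom (m : ℕ) : Subgroup BraidInf :=
  Subgroup.closure {x | ∃ i : ℕ, m ≤ i ∧ x = sig i}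

theorem braid_rel1 {i j : ℕ+} (h : (j : ℕ) = (i : ℕ) + 1) :
    (PresentedGroup.of i : BraidInf) * .of j * .of i = .of j * .of i * .of j := by
  have h1 : (FreeGroup.of i * FreeGroup.of j * FreeGroup.of i *
      (FreeGroup.of j * FreeGroup.of i * FreeGroup.of j)⁻¹) ∈ braidRels :=
    ⟨i, j, Or.inl ⟨h, rfl⟩⟩
  have h2 : (PresentedGroup.mk braidRels) (FreeGroup.of i * FreeGroup.of j * FreeGroup.of i *
      (FreeGroup.of j * FreeGroup.of i * FreeGroup.of j)⁻¹) = 1 :=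
    (QuotientGroup.eq_one_iff _).mpr (Subgroup.subset_normalClosure h1)
  simp only [map_mul, map_inv] at h2
  exact mul_inv_eq_one.mp h2

theorem braid_rel2 {i j : ℕ+} (h : (i : ℕ) + 1 < (j : ℕ)) :
    (PresentedGroup.of i : BraidInf) * .of j = .of j * .of i := by
  have h1 : (FreeGroup.of i * FreeGroup.of j * (FreeGroup.of j * FreeGroup.of i)⁻¹) ∈ braidRels :=
    ⟨i, j, Or.inr ⟨h, rfl⟩⟩
  have h2 : (PresentedGroup.mk braidRels) (FreeGroup.of i * FreeGroup.of j *
      (FreeGroup.of j * FreeGroup.of i)⁻¹) = 1 :=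
    (QuotientGroup.eq_one_iff _).mpr (Subgroup.subset_normalClosure h1)
  simp only [map_mul, map_inv] at h2
  exact mul_inv_eq_one.mp h2

theorem shMap_rels : ∀ r ∈ braidRels,
    FreeGroup.lift (fun i : ℕ+ => (PresentedGroup.of (i + 1) : BraidInf)) r = 1 := by
  rintro r ⟨i, j, ⟨h, rfl⟩ | ⟨h, rfl⟩⟩
  · simp only [map_mul, map_inv, FreeGroup.lift_apply_of]
    rw [mul_inv_eq_one]
    exact braid_rel1 (by push_cast; omega)
  · simp only [map_mul, map_inv, FreeGroup.lift_apply_of]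
    rw [mul_inv_eq_one]
    exact braid_rel2 (by push_cast; omega)

/-- The shift endomorphism `sh` of `B∞`, determined by `sh(σ_i) = σ_{i+1}`. -/
def sh : BraidInf →* BraidInf := PresentedGroup.toGroup shMap_rels

/-- The `m`-shift `sh_m(τ) = σ_m σ_{m−1} ⋯ σ_1 ⬝ sh(τ) ⬝ σ_1^{−1} ⋯ σ_{m−1}^{−1} σ_m^{−1}`. -/
def shm (m : ℕ) (τ : BraidInf) : BraidInf :=
  descProd sig m 1 * sh τ * ascProd (fun i => (sig i)⁻¹) 1 m

/-!
Write `P m = σ_1 ⋯ σ_m`. Since `P (j - 1) * σ_j = P j`, the definition of `γ_j` reads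
`γ_j = P j * (P (j - 1))⁻¹`, so the descending product `γ_l ⋯ γ_k` telescopes to
`P l * (P (k - 1))⁻¹`. No braid relation is involved.
-/

section Products

variable {G : Type*}

lemma ascProd_succ [Monoid G] (f : ℕ → G) {a b : ℕ} (h : a ≤ b + 1) :
    ascProd f a (b + 1) = ascProd f a b * f (b + 1) := by
  have hlen : b + 1 + 1 - a = (b + 1 - a) + 1 := by omega
  have hlast : a + (b + 1 - a) = b + 1 := by omega
  simp only [ascProd, hlen, List.range'_concat, List.map_append, List.prod_append, one_mul, hlast,
    List.map_singleton, List.prod_singleton]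

lemma descProd_succ [Monoid G] (f : ℕ → G) {a b : ℕ} (h : a ≤ b + 1) :
    descProd f (b + 1) a = f (b + 1) * descProd f b a := by
  have hlen : b + 1 + 1 - a = (b + 1 - a) + 1 := by omega
  have hlast : a + (b + 1 - a) = b + 1 := by omega
  simp only [descProd, hlen, List.range'_concat, List.map_append, List.reverse_append,
    List.prod_append, one_mul, hlast, List.map_singleton, List.reverse_singleton, List.prod_singleton]

lemma descProd_self [Monoid G] (f : ℕ → G) (a : ℕ) : descProd f a a = f a := by
  simp [descProd]

lemma descProd_inv [Group G] (f : ℕ → G) (b a : ℕ) :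
    descProd (fun i => (f i)⁻¹) b a = (ascProd f a b)⁻¹ := by
  rw [ascProd, List.prod_inv_reverse, List.map_map]
  rfl

lemma descProd_mul_inv_telescope [Group G] (g : ℕ → G) {k l : ℕ} (hkl : k ≤ l) :
    descProd (fun j => g j * (g (j - 1))⁻¹) l k = g l * (g (k - 1))⁻¹ := by
  induction l, hkl using Nat.le_induction with
  | base => exact descProd_self _ k
  | succ l hkl ih =>
    rw [descProd_succ _ (by omega), ih, Nat.add_sub_cancel]
    group

end Products

lemma γ_eq_ascProd_mul_inv (j : ℕ) :
    γ j = ascProd sig 1 j * (ascProd sig 1 (j - 1))⁻¹ := by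
  rw [γ, descProd_inv]
  cases j with
  | zero => simp [ascProd, sig]
  | succ j => rw [Nat.add_sub_cancel, ascProd_succ sig (by omega)]

theorem descProd_gamma_eq_general (k l : ℕ) (hkl : k ≤ l) :
    descProd γ l k = ascProd sig 1 l * descProd (fun i => (sig i)⁻¹) (k - 1) 1 := by
  rw [descProd_inv, ← descProd_mul_inv_telescope (ascProd sig 1) hkl]
  exact congrArg (descProd · l k) (funext γ_eq_ascProd_mul_inv)

/-- In `B∞`, for `1 ≤ k ≤ l`:
`γ_l γ_{l−1} ⋯ γ_{k+1} γ_k = (σ_1 σ_2 ⋯ σ_{l−1} σ_l)(σ_{k−1}⁻¹ σ_{k−2}⁻¹ ⋯ σ_2⁻¹ σ_1⁻¹)`. -/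
theorem descProd_gamma_eq (k l : ℕ) (hk : 1 ≤ k) (hkl : k ≤ l) :
    descProd γ l k = ascProd sig 1 l * descProd (fun i => (sig i)⁻¹) (k - 1) 1 :=
  descProd_gamma_eq_general k l hkl
end

section
/- In the braid group B∞, the square roots of free generators satisfy γ_3 γ_2 γ_1 γ_3 = γ_2 γ_1 γ_3 γ_2, but after interchanging the subscripts 1 and 2 the corresponding identity fails: γ_3 γ_1 γ_2 γ_3 ≠ γ_1 γ_2 γ_3 γ_1. (Hence the sequence (γ_n) is not exchangeable.) -/
/-!
Writing `γ_1 = σ_1`, `γ_2 = σ_1 σ_2 σ_1⁻¹` and `γ_3 = σ_1 σ_2 σ_3 σ_2⁻¹ σ_1⁻¹`, the relation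
`γ_3 γ_2 γ_1 γ_3 = γ_2 γ_1 γ_3 γ_2` reduces to `σ_1 σ_3 = σ_3 σ_1` and `σ_2 σ_3 σ_2 = σ_3 σ_2 σ_3`.
The swapped relation is refuted by Artin's representation of `B∞` by automorphisms of the free
group on `x_1, x_2, …`, where `σ_n` sends `x_n ↦ x_n x_{n+1} x_n⁻¹`, `x_{n+1} ↦ x_n` and fixes the
other generators: the two sides send `x_1` to different reduced words.
-/

section BraidInfLift

variable {G : Type*} [Group G] {f : ℕ → G}

lemma lift_braidRels_eq_one
    (braid : ∀ n, 0 < n → f n * f (n + 1) * f n = f (n + 1) * f n * f (n + 1))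
    (comm : ∀ m n, 0 < m → m + 1 < n → f m * f n = f n * f m) :
    ∀ r ∈ braidRels, FreeGroup.lift (fun i : ℕ+ => f i) r = 1 := by
  rintro r ⟨i, j, ⟨h, rfl⟩ | ⟨h, rfl⟩⟩ <;>
    simp only [map_mul, map_inv, FreeGroup.lift_apply_of, mul_inv_eq_one]
  · rw [h]
    exact braid i i.pos
  · exact comm i j i.pos h

def BraidInf.lift (f : ℕ → G)
    (braid : ∀ n, 0 < n → f n * f (n + 1) * f n = f (n + 1) * f n * f (n + 1))
    (comm : ∀ m n, 0 < m → m + 1 < n → f m * f n = f n * f m) : BraidInf →* G :=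
  PresentedGroup.toGroup (lift_braidRels_eq_one braid comm)

lemma BraidInf.lift_sig
    (braid : ∀ n, 0 < n → f n * f (n + 1) * f n = f (n + 1) * f n * f (n + 1))
    (comm : ∀ m n, 0 < m → m + 1 < n → f m * f n = f n * f m) {k : ℕ} (hk : 0 < k) :
    BraidInf.lift f braid comm (sig k) = f k := by
  rw [sig, dif_pos hk]
  exact PresentedGroup.toGroup.of _

end BraidInfLift

open FreeGroup

lemma sig_braid {i : ℕ} (hi : 0 < i) :
    sig i * sig (i + 1) * sig i = sig (i + 1) * sig i * sig (i + 1) := by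
  simp only [sig, dif_pos hi, dif_pos i.succ_pos]
  exact braid_rel1 rfl

lemma sig_comm {i j : ℕ} (hi : 0 < i) (hij : i + 1 < j) : sig i * sig j = sig j * sig i := by
  simp only [sig, dif_pos hi, dif_pos (hi.trans (i.lt_succ_self.trans hij))]
  exact braid_rel2 hij

lemma γ_one : γ 1 = sig 1 := by
  simp [γ, ascProd, descProd]

lemma γ_two : γ 2 = sig 1 * sig 2 * (sig 1)⁻¹ := by
  simp [γ, ascProd, descProd]

lemma γ_three : γ 3 = sig 1 * sig 2 * sig 3 * (sig 2)⁻¹ * (sig 1)⁻¹ := by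
  simp [γ, ascProd, descProd, List.range', mul_assoc]

lemma γ_relation : γ 3 * γ 2 * γ 1 * γ 3 = γ 2 * γ 1 * γ 3 * γ 2 := by
  calc γ 3 * γ 2 * γ 1 * γ 3
      = sig 1 * sig 2 * (sig 3 * sig 1) * (sig 2 * sig 3 * (sig 2)⁻¹) * (sig 1)⁻¹ := by
        rw [γ_one, γ_two, γ_three]; group
    _ = sig 1 * sig 2 * sig 1 * (sig 3 * sig 2 * sig 3) * (sig 2)⁻¹ * (sig 1)⁻¹ := by
        rw [← sig_comm one_pos (by norm_num : 1 + 1 < 3)]; group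
    _ = γ 2 * γ 1 * γ 3 * γ 2 := by
        rw [← sig_braid two_pos, γ_one, γ_two, γ_three]; group

def artinGen (n j : ℕ) : FreeGroup ℕ :=
  if j = n then of n * of (n + 1) * (of n)⁻¹ else if j = n + 1 then of n else of j

def artinGenInv (n j : ℕ) : FreeGroup ℕ :=
  if j = n then of (n + 1) else if j = n + 1 then (of (n + 1))⁻¹ * of n * of (n + 1) else of j

section ArtinGen

variable {n j : ℕ}

@[simp] lemma artinGen_self : artinGen n n = of n * of (n + 1) * (of n)⁻¹ := if_pos rfl

@[simp] lemma artinGen_succ : artinGen n (n + 1) = of n := by simp [artinGen]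

lemma artinGen_of_ne (h : j ≠ n) (h' : j ≠ n + 1) : artinGen n j = of j := by
  simp [artinGen, h, h']

@[simp] lemma artinGenInv_self : artinGenInv n n = of (n + 1) := if_pos rfl

@[simp] lemma artinGenInv_succ :
    artinGenInv n (n + 1) = (of (n + 1))⁻¹ * of n * of (n + 1) := by
  simp [artinGenInv]

lemma artinGenInv_of_ne (h : j ≠ n) (h' : j ≠ n + 1) : artinGenInv n j = of j := by
  simp [artinGenInv, h, h']

end ArtinGen

lemma FreeGroup.mulAut_ext {α : Type*} {f g : MulAut (FreeGroup α)}
    (h : ∀ a, f (of a) = g (of a)) : f = g :=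
  MulEquiv.toMonoidHom_injective (ext_hom _ _ h)

def artinAut (n : ℕ) : MulAut (FreeGroup ℕ) :=
  MonoidHom.toMulEquiv (FreeGroup.lift (artinGen n)) (FreeGroup.lift (artinGenInv n))
    (ext_hom _ _ fun j => by
      obtain rfl | rfl | h : j = n ∨ j = n + 1 ∨ (j ≠ n ∧ j ≠ n + 1) := by omega
      all_goals simp (disch := omega) [artinGen_of_ne, artinGenInv_of_ne, mul_assoc])
    (ext_hom _ _ fun j => by
      obtain rfl | rfl | h : j = n ∨ j = n + 1 ∨ (j ≠ n ∧ j ≠ n + 1) := by omega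
      all_goals simp (disch := omega) [artinGen_of_ne, artinGenInv_of_ne, mul_assoc])

@[simp] lemma artinAut_of (n j : ℕ) : artinAut n (of j) = artinGen n j := lift_apply_of

@[simp] lemma artinAut_symm_of (n j : ℕ) : (artinAut n).symm (of j) = artinGenInv n j :=
  lift_apply_of

lemma artinAut_braid (n : ℕ) :
    artinAut n * artinAut (n + 1) * artinAut n =
      artinAut (n + 1) * artinAut n * artinAut (n + 1) := by
  refine FreeGroup.mulAut_ext fun j => ?_
  obtain rfl | rfl | rfl | h :
      j = n ∨ j = n + 1 ∨ j = n + 2 ∨ (j ≠ n ∧ j ≠ n + 1 ∧ j ≠ n + 2) := by omega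
  all_goals simp (disch := omega) [artinGen_of_ne]
  group

lemma artinAut_comm {m n : ℕ} (h : m + 1 < n) :
    artinAut m * artinAut n = artinAut n * artinAut m := by
  refine FreeGroup.mulAut_ext fun j => ?_
  obtain rfl | rfl | rfl | rfl | h : j = m ∨ j = m + 1 ∨ j = n ∨ j = n + 1 ∨
      (j ≠ m ∧ j ≠ m + 1 ∧ j ≠ n ∧ j ≠ n + 1) := by omega
  all_goals simp (disch := omega) [artinGen_of_ne]

def artinRep : BraidInf →* MulAut (FreeGroup ℕ) :=
  BraidInf.lift artinAut (fun n _ => artinAut_braid n) (fun _ _ _ h => artinAut_comm h)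

lemma artinRep_sig {k : ℕ} (hk : 0 < k) : artinRep (sig k) = artinAut k :=
  BraidInf.lift_sig _ _ hk

lemma γ_relation_swap_ne : γ 3 * γ 1 * γ 2 * γ 3 ≠ γ 1 * γ 2 * γ 3 * γ 1 := by
  intro h
  have h1 := congrArg (fun g => artinRep g (of 1)) h
  simp (disch := omega) [γ_one, γ_two, γ_three, artinRep_sig, artinGen_of_ne,
    artinGenInv_of_ne] at h1
  -- equality of free-group words is decided by free reduction
  exact absurd h1 (by decide)

/-- `γ_3 γ_2 γ_1 γ_3 = γ_2 γ_1 γ_3 γ_2`, but interchanging the subscripts `1` and `2` the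
corresponding identity fails: `γ_3 γ_1 γ_2 γ_3 ≠ γ_1 γ_2 γ_3 γ_1`. -/
theorem gamma_relation_not_exchangeable :
    γ 3 * γ 2 * γ 1 * γ 3 = γ 2 * γ 1 * γ 3 * γ 2 ∧
    γ 3 * γ 1 * γ 2 * γ 3 ≠ γ 1 * γ 2 * γ 3 * γ 1 :=
  ⟨γ_relation, γ_relation_swap_ne⟩
end
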